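/- For a Cartesian product of edges and even cycles, the Helly number is at most 3: any finite family of pairwise intersecting convex subsets of the product has a common vertex; in particular h(K_2) = 2 and h(C) = 3 for an even cycle C of length at least 6. -/

import Mathlib

variable {α : Type*}

/-- `W` is (geodesically) convex in `G`. -/
def GConvex (G : SimpleGraph α) (W : Set α) : Prop :=
  ∀ u ∈ W, ∀ v ∈ W, ∀ w, G.dist u w + G.dist w v = G.dist u v → w ∈ W

/-- `H` is gated in `G`: every vertex has a gate in `H`. -/
def Gated (G : SimpleGraph α) (H : Set α) : Prop :=
  ∀ x, ∃ g ∈ H, ∀ y ∈ H, G.dist x y = G.dist x g + G.dist g y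

/-- Adjacency of a cycle on `ZMod n` (for `n = 2` this is `K₂`). -/
def cycleAdj (n : ℕ) (x y : ZMod n) : Prop := x ≠ y ∧ (y = x + 1 ∨ x = y + 1)

/-- The cycle graph on `ZMod n`. -/
def cycGraph (n : ℕ) : SimpleGraph (ZMod n) where
  Adj x y := cycleAdj n x y
  symm := by
    constructor
    rintro x y ⟨h1, h2⟩
    exact ⟨Ne.symm h1, h2.symm⟩
  loopless := by
    constructor
    rintro x ⟨h1, _⟩
    exact h1 rfl

/-- The Cartesian product of the cycles/edges `ZMod (F i)`. -/
def edgeCycleProd {m : ℕ} (F : Fin m → ℕ) : SimpleGraph (∀ i, ZMod (F i)) where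
  Adj x y := ∃ i, cycleAdj (F i) (x i) (y i) ∧ ∀ j, j ≠ i → x j = y j
  symm := by
    constructor
    rintro x y ⟨i, ⟨h1, h2⟩, h3⟩
    exact ⟨i, ⟨Ne.symm h1, h2.symm⟩, fun j hj => (h3 j hj).symm⟩
  loopless := by
    constructor
    rintro x ⟨i, ⟨h1, _⟩, _⟩
    exact h1 rfl

/-!
Distances in a Cartesian product add up over the coordinates, so a convex set of the product is
closed under exchanging single coordinates between its points; hence it is the product of its
projections, which are convex, and a Helly bound for the factors passes to the product
coordinatewise. In a cycle, a proper convex set lies on an arc shorter than half the cycle, along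
which the cycle distance is the distance of a path. Intersecting every member of a family with one
proper member thus turns a family of convex sets meeting three by three into pairwise meeting
intervals of `ℕ`, which have a common point. Three arcs covering a cycle of length at least 5
meet pairwise but not all together.
-/

open SimpleGraph Function Set

lemma GConvex.inter {G : SimpleGraph α} {U W : Set α} (hU : GConvex G U)
    (hW : GConvex G W) : GConvex G (U ∩ W) :=
  fun u hu v hv w hw => ⟨hU u hu.1 v hv.1 w hw, hW u hu.2 v hv.2 w hw⟩

def HellyNumberLeThree (G : SimpleGraph α) : Prop :=
  ∀ (ι : Type) [Finite ι] (W : ι → Set α), (∀ j, GConvex G (W j)) →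
    (∀ j k l, (W j ∩ W k ∩ W l).Nonempty) → (⋂ j, W j).Nonempty

theorem Nat.nonempty_iInter_of_ordConnected {ι : Type*} [Finite ι] [Nonempty ι]
    {S : ι → Set ℕ} (hS : ∀ j, (S j).OrdConnected) (hS' : ∀ j k, (S j ∩ S k).Nonempty) :
    (⋂ j, S j).Nonempty := by
  have hmem : ∀ j, sInf (S j) ∈ S j := fun j => Nat.sInf_mem ((hS' j j).mono inter_subset_left)
  obtain ⟨jm, hjm⟩ := Finite.exists_max fun j => sInf (S j)
  refine ⟨sInf (S jm), mem_iInter.2 fun j => ?_⟩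
  obtain ⟨r, hrj, hrjm⟩ := hS' j jm
  exact (hS j).out (hmem j) hrj ⟨hjm j, Nat.sInf_le hrjm⟩

namespace ZMod

lemma natAbs_valMinAbs_add_le_add {n : ℕ} (a b : ZMod n) :
    (a + b).valMinAbs.natAbs ≤ a.valMinAbs.natAbs + b.valMinAbs.natAbs :=
  (natAbs_valMinAbs_add_le a b).trans (Int.natAbs_add_le _ _)

lemma natAbs_valMinAbs_natCast_of_two_mul_le {n d : ℕ} (h : 2 * d ≤ n) :
    (d : ZMod n).valMinAbs.natAbs = d := by
  rw [valMinAbs_natCast_of_le_half (by omega), Int.natAbs_natCast]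

variable {n : ℕ} [NeZero n]

lemma val_sub_of_lt {a b : ZMod n} (h : a.val < b.val) : (a - b).val = n + a.val - b.val := by
  have hba : (b - a).val = b.val - a.val := val_sub h.le
  have hne : b - a ≠ 0 := by rw [← val_pos, hba]; omega
  rw [show a - b = -(b - a) by ring, neg_val, if_neg hne, hba]
  have := b.val_lt
  omega

-- A point `c` on a geodesic from `0` to a short `d` lies on the arc `0, 1, …, d`.
lemma val_le_of_natAbs_valMinAbs_add_eq {c d : ZMod n} (hd : 2 * d.val < n)
    (h : c.valMinAbs.natAbs + (d - c).valMinAbs.natAbs = d.valMinAbs.natAbs) :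
    c.val ≤ d.val := by
  by_contra! hdc
  rw [show d - c = -(c - d) by ring, natAbs_valMinAbs_neg, valMinAbs_natAbs_eq_min,
    valMinAbs_natAbs_eq_min, valMinAbs_natAbs_eq_min, val_sub hdc.le] at h
  have := c.val_lt
  omega

end ZMod

open ZMod

section Cycle

variable {n : ℕ} [Fact (1 < n)]

lemma cycGraph_adj_add_one (x : ZMod n) : (cycGraph n).Adj x (x + 1) :=
  ⟨by simp, Or.inl rfl⟩

lemma cycGraph_exists_walk_add_natCast (x : ZMod n) :
    ∀ k : ℕ, ∃ w : (cycGraph n).Walk x (x + k), w.length = k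
  | 0 => ⟨Walk.nil.copy rfl (by simp), by simp⟩
  | k + 1 =>
    let ⟨w, hw⟩ := cycGraph_exists_walk_add_natCast x k
    ⟨(w.concat (cycGraph_adj_add_one _)).copy rfl (by push_cast; ring), by simp [hw]⟩

lemma cycGraph_exists_walk (x y : ZMod n) :
    ∃ w : (cycGraph n).Walk x y, w.length = (y - x).valMinAbs.natAbs := by
  have hcast := coe_valMinAbs (y - x)
  rcases Int.natAbs_eq (y - x).valMinAbs with h | h
  · obtain ⟨w, hw⟩ := cycGraph_exists_walk_add_natCast x (y - x).valMinAbs.natAbs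
    have hy : x + ((y - x).valMinAbs.natAbs : ZMod n) = y := by
      rw [← Int.cast_natCast, ← h, hcast]
      ring
    exact ⟨w.copy rfl hy, by simpa⟩
  · obtain ⟨w, hw⟩ := cycGraph_exists_walk_add_natCast y (y - x).valMinAbs.natAbs
    have hx : y + ((y - x).valMinAbs.natAbs : ZMod n) = x := by
      rw [← Int.cast_natCast, ← neg_eq_iff_eq_neg.2 h, Int.cast_neg, hcast]
      ring
    exact ⟨(w.copy rfl hx).reverse, by simpa⟩

lemma cycGraph_connected : (cycGraph n).Connected :=
  (connected_iff_exists_forall_reachable _).2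
    ⟨0, fun y => ⟨(cycGraph_exists_walk 0 y).choose⟩⟩

lemma natAbs_valMinAbs_sub_le_length {x y : ZMod n} (w : (cycGraph n).Walk x y) :
    (y - x).valMinAbs.natAbs ≤ w.length := by
  induction w with
  | nil => simp
  | @cons u v z huv p ih =>
    have hone : (1 : ZMod n).valMinAbs.natAbs = 1 := by
      have := Fact.out (p := 1 < n)
      simpa using natAbs_valMinAbs_natCast_of_two_mul_le (n := n) (d := 1) (by omega)
    have hstep : (v - u).valMinAbs.natAbs ≤ 1 := by
      obtain ⟨-, h | h⟩ := huv
      · rw [h, add_sub_cancel_left, hone]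
      · rw [h, sub_add_cancel_left, natAbs_valMinAbs_neg, hone]
    calc (z - u).valMinAbs.natAbs
        = (z - v + (v - u)).valMinAbs.natAbs := by rw [sub_add_sub_cancel]
      _ ≤ p.length + 1 := (natAbs_valMinAbs_add_le_add _ _).trans (by omega)
      _ = (Walk.cons huv p).length := rfl

theorem cycGraph_dist (x y : ZMod n) :
    (cycGraph n).dist x y = (y - x).valMinAbs.natAbs := by
  obtain ⟨w, hw⟩ := cycGraph_exists_walk x y
  obtain ⟨p, hp⟩ := Reachable.exists_walk_length_eq_dist ⟨w⟩
  exact le_antisymm (hw ▸ dist_le w) (hp ▸ natAbs_valMinAbs_sub_le_length p)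

end Cycle

/-- The vertices `a, a + 1, …, a + l` of the cycle, for `l < n`. -/
def arc {n : ℕ} (a : ZMod n) (l : ℕ) : Set (ZMod n) := {x | (x - a).val ≤ l}

lemma mem_arc {n : ℕ} {a x : ZMod n} {l : ℕ} : x ∈ arc a l ↔ (x - a).val ≤ l := Iff.rfl

section Arc

variable {n : ℕ} [Fact (1 < n)]

lemma cycGraph_dist_add_natCast (a : ZMod n) {r p : ℕ} (hrp : r ≤ p) (h : 2 * (p - r) ≤ n) :
    (cycGraph n).dist (a + r) (a + p) = p - r := by
  rw [cycGraph_dist, show a + p - (a + r) = ((p - r : ℕ) : ZMod n) by push_cast [hrp]; ring,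
    natAbs_valMinAbs_natCast_of_two_mul_le h]

lemma GConvex.ordConnected_setOf_add_natCast {C : Set (ZMod n)} (hC : GConvex (cycGraph n) C)
    (a : ZMod n) {l : ℕ} (hl : 2 * l < n) : {r : ℕ | r ≤ l ∧ a + r ∈ C}.OrdConnected := by
  refine ⟨fun r hr p hp q ⟨hrq, hqp⟩ => ⟨hqp.trans hp.1, hC _ hr.2 _ hp.2 _ ?_⟩⟩
  have := hp.1
  rw [cycGraph_dist_add_natCast a hrq (by omega), cycGraph_dist_add_natCast a hqp (by omega),
    cycGraph_dist_add_natCast a (hrq.trans hqp) (by omega)]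
  omega

lemma gConvex_arc (a : ZMod n) {l : ℕ} (hl : 2 * l < n) : GConvex (cycGraph n) (arc a l) := by
  intro u hu v hv w hw
  rw [mem_arc] at hu hv ⊢
  wlog hle : (u - a).val ≤ (v - a).val generalizing u v
  · refine this v hv u hu ?_ (by omega)
    rwa [SimpleGraph.dist_comm, add_comm, SimpleGraph.dist_comm (u := w),
      SimpleGraph.dist_comm (u := v)]
  rw [cycGraph_dist, cycGraph_dist, cycGraph_dist] at hw
  have hvu : (v - u).val = (v - a).val - (u - a).val := by
    rw [← val_sub hle, sub_sub_sub_cancel_right]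
  have hwu : (w - u).val ≤ (v - u).val :=
    val_le_of_natAbs_valMinAbs_add_eq (by omega) (by rwa [sub_sub_sub_cancel_right])
  rw [show w - a = (w - u) + (u - a) by ring, val_add_of_lt (by omega)]
  omega

lemma GConvex.exists_subset_arc {W : Set (ZMod n)} (hW : GConvex (cycGraph n) W)
    (hne : W.Nonempty) (hW' : W ≠ univ) : ∃ a l, 2 * l < n ∧ W ⊆ arc a l := by
  obtain ⟨z, hz⟩ := (ne_univ_iff_exists_notMem W).1 hW'
  obtain ⟨u, hu, hmin⟩ := W.exists_min_image (fun w => (w - z).val) W.toFinite hne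
  obtain ⟨v, hv, hmax⟩ := W.exists_max_image (fun w => (w - z).val) W.toFinite hne
  have hsub : ∀ w ∈ W, (w - u).val = (w - z).val - (u - z).val := fun w hw => by
    rw [← val_sub (hmin w hw), sub_sub_sub_cancel_right]
  refine ⟨u, (v - u).val, ?_, fun w hw => ?_⟩
  · by_contra! hlong
    -- otherwise `z` lies on the longer way from `u` round to `v`, which is then a geodesic
    have huz : u - z ≠ 0 := fun h => hz (sub_eq_zero.1 h ▸ hu)
    refine hz (hW u hu v hv z ?_)
    rw [cycGraph_dist, cycGraph_dist, cycGraph_dist, valMinAbs_natAbs_eq_min,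
      valMinAbs_natAbs_eq_min, valMinAbs_natAbs_eq_min, show z - u = -(u - z) by ring, neg_val,
      if_neg huz, hsub v hv]
    rw [hsub v hv] at hlong
    have := (v - z).val_lt
    have := val_pos.2 huz
    omega
  · rw [mem_arc, hsub w hw, hsub v hv]
    have := hmax w hw
    omega

theorem hellyNumberLeThree_cycGraph : HellyNumberLeThree (cycGraph n) := by
  intro ι _ C hC hC3
  by_cases hall : ∀ j, C j = univ
  · exact ⟨0, mem_iInter.2 fun j => hall j ▸ trivial⟩
  obtain ⟨j₀, hj₀⟩ := not_forall.1 hall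
  have : Nonempty ι := ⟨j₀⟩
  obtain ⟨a, l, hl, hsub⟩ :=
    (hC j₀).exists_subset_arc ((hC3 j₀ j₀ j₀).mono inter_subset_right) hj₀
  set S : ι → Set ℕ := fun j => {r | r ≤ l ∧ a + r ∈ C j ∩ C j₀}
  have hS : ∀ j, (S j).OrdConnected := fun j =>
    ((hC j).inter (hC j₀)).ordConnected_setOf_add_natCast a hl
  have hS' : ∀ j k, (S j ∩ S k).Nonempty := by
    intro j k
    obtain ⟨x, ⟨hxj, hxk⟩, hx₀⟩ := hC3 j k j₀
    have hx : a + ((x - a).val : ZMod n) = x := by rw [natCast_zmod_val]; ring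
    refine ⟨(x - a).val, ⟨hsub hx₀, ?_⟩, ⟨hsub hx₀, ?_⟩⟩ <;> rw [hx]
    exacts [⟨hxj, hx₀⟩, ⟨hxk, hx₀⟩]
  obtain ⟨r, hr⟩ := Nat.nonempty_iInter_of_ordConnected hS hS'
  exact ⟨a + r, mem_iInter.2 fun j => (mem_iInter.1 hr j).2.1⟩

end Arc

namespace SimpleGraph

variable {ι : Type*} {V : ι → Type*}

def piBox (G : ∀ i, SimpleGraph (V i)) : SimpleGraph (∀ i, V i) where
  Adj x y := ∃ i, (G i).Adj (x i) (y i) ∧ ∀ j, j ≠ i → x j = y j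
  symm := by
    constructor
    rintro x y ⟨i, h, h'⟩
    exact ⟨i, h.symm, fun j hj => (h' j hj).symm⟩
  loopless := by
    constructor
    rintro x ⟨i, h, -⟩
    exact (G i).loopless.irrefl _ h

variable {G : ∀ i, SimpleGraph (V i)} [DecidableEq ι]

def piBoxUpdate (G : ∀ i, SimpleGraph (V i)) (x : ∀ i, V i) (i : ι) : G i →g piBox G where
  toFun c := update x i c
  map_rel' {a b} hab := ⟨i, by simpa using hab, fun j hj => by simp [update_of_ne hj]⟩

variable [Fintype ι]

lemma sum_dist_le_length_of_piBox {x y : ∀ i, V i} (w : (piBox G).Walk x y) :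
    ∑ i, (G i).dist (x i) (y i) ≤ w.length := by
  induction w with
  | nil => simp
  | @cons u v z huv p ih =>
    rw [Walk.length_cons]
    obtain ⟨i₀, hadj, heq⟩ := huv
    have hstep : ∀ i,
        (G i).dist (u i) (z i) ≤ (G i).dist (v i) (z i) + if i = i₀ then 1 else 0 := by
      intro i
      split_ifs with hi
      · subst hi
        rw [add_comm, ← dist_eq_one_iff_adj.2 hadj]
        exact hadj.reachable.dist_triangle_left _
      · rw [heq i hi, add_zero]
    calc ∑ i, (G i).dist (u i) (z i)
        ≤ ∑ i, ((G i).dist (v i) (z i) + if i = i₀ then 1 else 0) :=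
          Finset.sum_le_sum fun i _ => hstep i
      _ = ∑ i, (G i).dist (v i) (z i) + 1 := by simp [Finset.sum_add_distrib]
      _ ≤ p.length + 1 := by omega

lemma exists_walk_length_eq_sum_dist_of_piBox (hG : ∀ i, (G i).Connected) (x y : ∀ i, V i) :
    ∃ w : (piBox G).Walk x y, w.length = ∑ i, (G i).dist (x i) (y i) := by
  suffices H : ∀ s : Finset ι, ∀ x : ∀ i, V i, (∀ i ∉ s, x i = y i) →
      ∃ w : (piBox G).Walk x y, w.length = ∑ i ∈ s, (G i).dist (x i) (y i) by
    simpa using H Finset.univ x (by simp)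
  intro s
  induction s using Finset.induction_on with
  | empty =>
    intro x hx
    obtain rfl : x = y := funext fun i => hx i (Finset.notMem_empty i)
    exact ⟨Walk.nil, by simp⟩
  | @insert i s hi ih =>
    intro x hx
    obtain ⟨w₁, hw₁⟩ := (hG i).exists_walk_length_eq_dist (x i) (y i)
    obtain ⟨w₂, hw₂⟩ := ih (update x i (y i)) fun j hj => by
      by_cases hji : j = i
      · subst hji; simp
      · rw [update_of_ne hji]; exact hx j (by simp [hji, hj])
    have hx₀ : piBoxUpdate G x i (x i) = x := update_eq_self i x
    have hy₀ : piBoxUpdate G x i (y i) = update x i (y i) := rfl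
    refine ⟨((w₁.map (piBoxUpdate G x i)).copy hx₀ hy₀).append w₂, ?_⟩
    rw [Walk.length_append, Walk.length_copy, Walk.length_map, hw₁, hw₂, Finset.sum_insert hi]
    congr 1
    refine Finset.sum_congr rfl fun j hj => ?_
    rw [update_of_ne (ne_of_mem_of_not_mem hj hi)]

theorem dist_piBox (hG : ∀ i, (G i).Connected) (x y : ∀ i, V i) :
    (piBox G).dist x y = ∑ i, (G i).dist (x i) (y i) := by
  obtain ⟨w, hw⟩ := exists_walk_length_eq_sum_dist_of_piBox hG x y
  obtain ⟨p, hp⟩ := Reachable.exists_walk_length_eq_dist ⟨w⟩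
  exact le_antisymm (hw ▸ dist_le w) (hp ▸ sum_dist_le_length_of_piBox p)

end SimpleGraph

section PiBox

variable {ι : Type*} [Fintype ι] [DecidableEq ι] {V : ι → Type*}
  {G : ∀ i, SimpleGraph (V i)} {W : Set (∀ i, V i)}

lemma GConvex.update_mem (hG : ∀ i, (G i).Connected) (hW : GConvex (piBox G) W)
    {u w : ∀ i, V i} (hu : u ∈ W) (hw : w ∈ W) (i : ι) : update w i (u i) ∈ W := by
  refine hW w hw u hu _ ?_
  rw [dist_piBox hG, dist_piBox hG, dist_piBox hG, ← Finset.sum_add_distrib]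
  refine Finset.sum_congr rfl fun j _ => ?_
  by_cases hj : j = i
  · subst hj; simp
  · simp [update_of_ne hj]

lemma GConvex.image_eval (hG : ∀ i, (G i).Connected) (hW : GConvex (piBox G) W) (i : ι) :
    GConvex (G i) (eval i '' W) := by
  rintro _ ⟨u, hu, rfl⟩ _ ⟨v, hv, rfl⟩ c hc
  refine ⟨update u i c, hW u hu _ (hW.update_mem hG hv hu i) _ ?_, update_self i c u⟩
  rw [dist_piBox hG, dist_piBox hG, dist_piBox hG, ← Finset.sum_add_distrib]
  refine Finset.sum_congr rfl fun j _ => ?_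
  by_cases hj : j = i
  · subst hj; simpa using hc
  · simp [update_of_ne hj]

lemma GConvex.mem_of_forall_eval_mem (hG : ∀ i, (G i).Connected) (hW : GConvex (piBox G) W)
    (hne : W.Nonempty) {x : ∀ i, V i} (hx : ∀ i, x i ∈ eval i '' W) : x ∈ W := by
  suffices H : ∀ s : Finset ι, ∃ w ∈ W, ∀ i ∈ s, w i = x i by
    obtain ⟨w, hw, hwx⟩ := H Finset.univ
    rwa [← funext fun i => hwx i (Finset.mem_univ i)]
  intro s
  induction s using Finset.induction_on with
  | empty => exact ⟨hne.some, hne.some_mem, by simp⟩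
  | @insert i s hi ih =>
    obtain ⟨w, hw, hwx⟩ := ih
    obtain ⟨u, hu, hui⟩ := hx i
    refine ⟨update w i (u i), hW.update_mem hG hu hw i, fun j hj => ?_⟩
    rcases Finset.mem_insert.1 hj with rfl | hjs
    · simpa using hui
    · rw [update_of_ne (ne_of_mem_of_not_mem hjs hi)]
      exact hwx j hjs

theorem hellyNumberLeThree_piBox (hG : ∀ i, (G i).Connected)
    (hH : ∀ i, HellyNumberLeThree (G i)) :
    HellyNumberLeThree (piBox G) := by
  intro κ _ W hW hW3
  have hproj : ∀ i, (⋂ j, eval i '' W j).Nonempty := fun i =>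
    hH i κ _ (fun j => (hW j).image_eval hG i) fun j k l =>
      ((hW3 j k l).image (eval i)).mono <|
        (image_inter_subset _ _ _).trans (inter_subset_inter_left _ (image_inter_subset _ _ _))
  choose c hc using hproj
  exact ⟨c, mem_iInter.2 fun j => (hW j).mem_of_forall_eval_mem hG
    ((hW3 j j j).mono inter_subset_right) fun i => mem_iInter.1 (hc i) j⟩

end PiBox

lemma edgeCycleProd_eq_piBox {m : ℕ} (F : Fin m → ℕ) :
    edgeCycleProd F = piBox fun i => cycGraph (F i) :=
  rfl

lemma cycGraph_exists_gConvex_pairwise_inter_nonempty_iInter_eq_empty {n : ℕ} (hn : 5 ≤ n) :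
    ∃ W : Fin 3 → Set (ZMod n), (∀ j, GConvex (cycGraph n) (W j)) ∧
      (∀ j k, (W j ∩ W k).Nonempty) ∧ (⋂ j, W j) = ∅ := by
  have : Fact (1 < n) := ⟨by omega⟩
  -- three arcs covering the cycle, consecutive ones sharing an end point
  set p := (n - 1) / 2
  have hp : ((p : ℕ) : ZMod n).val = p := val_cast_of_lt (by omega)
  have h2p : ((2 * p : ℕ) : ZMod n).val = 2 * p := val_cast_of_lt (by omega)
  refine ⟨![arc 0 p, arc (p : ℕ) p, arc (2 * p : ℕ) (n - 2 * p)], fun j => ?_, ?_, ?_⟩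
  · fin_cases j <;> exact gConvex_arc _ (by omega)
  · have h0A : (0 : ZMod n) ∈ arc 0 p := by simp [mem_arc]
    have hpA : ((p : ℕ) : ZMod n) ∈ arc 0 p := by rw [mem_arc, sub_zero, hp]
    have hpB : ((p : ℕ) : ZMod n) ∈ arc (p : ℕ) p := by simp [mem_arc]
    have h2pB : ((2 * p : ℕ) : ZMod n) ∈ arc (p : ℕ) p := by
      rw [mem_arc, val_sub (by omega), h2p, hp]
      omega
    have h2pC : ((2 * p : ℕ) : ZMod n) ∈ arc (2 * p : ℕ) (n - 2 * p) := by simp [mem_arc]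
    have h0C : (0 : ZMod n) ∈ arc (2 * p : ℕ) (n - 2 * p) := by
      rw [mem_arc, val_sub_of_lt (by rw [val_zero, h2p]; omega), val_zero, h2p]
      omega
    intro j k
    fin_cases j <;> fin_cases k <;> dsimp <;>
      first
      | exact ⟨0, ‹_›, ‹_›⟩
      | exact ⟨((p : ℕ) : ZMod n), ‹_›, ‹_›⟩
      | exact ⟨((2 * p : ℕ) : ZMod n), ‹_›, ‹_›⟩
  · refine eq_empty_iff_forall_notMem.2 fun x hx => ?_
    have hA : x ∈ arc 0 p := mem_iInter.1 hx 0
    have hB : x ∈ arc (p : ℕ) p := mem_iInter.1 hx 1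
    have hC : x ∈ arc (2 * p : ℕ) (n - 2 * p) := mem_iInter.1 hx 2
    rw [mem_arc, sub_zero] at hA
    rw [mem_arc] at hB hC
    have hxp : x.val = p := by
      rcases le_or_gt p x.val with h | h
      · rw [val_sub (by rwa [hp]), hp] at hB
        omega
      · rw [val_sub_of_lt (by rwa [hp]), hp] at hB
        omega
    rw [val_sub_of_lt (by omega), h2p, hxp] at hC
    omega

lemma ZMod.nonempty_iInter_of_inter_nonempty {ι : Type*} (W : ι → Set (ZMod 2))
    (hW : ∀ j k, (W j ∩ W k).Nonempty) : (⋂ j, W j).Nonempty := by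
  by_cases h₁ : ∀ j, (1 : ZMod 2) ∈ W j
  · exact ⟨1, mem_iInter.2 h₁⟩
  obtain ⟨j₁, hj₁⟩ := not_forall.1 h₁
  refine ⟨0, mem_iInter.2 fun j => ?_⟩
  obtain ⟨x, hxj, hxj₁⟩ := hW j j₁
  fin_cases x
  · exact hxj
  · exact absurd hxj₁ hj₁

/-- The Helly number of a Cartesian product of edges and even cycles is at most 3:
every finite family of convex sets meeting 3 by 3 has a common vertex.
In particular `h(K₂) = 2` (pairwise intersecting convex sets in `K₂` meet) and
`h(C) = 3` for an even cycle `C` of length at least 6 (pairwise intersection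
does not suffice). -/
theorem stmt18 :
    (∀ (m : ℕ) (F : Fin m → ℕ), (∀ i, Even (F i) ∧ 2 ≤ F i) →
      ∀ (ι : Type) [Finite ι] (W : ι → Set (∀ i, ZMod (F i))),
        (∀ j, GConvex (edgeCycleProd F) (W j)) →
        (∀ j k l, (W j ∩ W k ∩ W l).Nonempty) →
        (⋂ j, W j).Nonempty) ∧
    (∀ (ι : Type) [Finite ι] (W : ι → Set (ZMod 2)),
        (∀ j, GConvex (cycGraph 2) (W j)) →
        (∀ j k, (W j ∩ W k).Nonempty) →
        (⋂ j, W j).Nonempty) ∧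
    (∀ n : ℕ, Even n → 6 ≤ n →
      ∃ W : Fin 3 → Set (ZMod n), (∀ j, GConvex (cycGraph n) (W j)) ∧
        (∀ j k, (W j ∩ W k).Nonempty) ∧ (⋂ j, W j) = ∅) := by
  refine ⟨fun m F hF ι _ W hW hW3 => ?_,
    fun ι _ W _ hW => ZMod.nonempty_iInter_of_inter_nonempty W hW,
    fun n _ hn => cycGraph_exists_gConvex_pairwise_inter_nonempty_iInter_eq_empty (by omega)⟩
  have (i : Fin m) : Fact (1 < F i) := ⟨(hF i).2⟩
  rw [edgeCycleProd_eq_piBox] at hW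
  exact hellyNumberLeThree_piBox (fun _ => cycGraph_connected)
    (fun _ => hellyNumberLeThree_cycGraph) ι W hW hW3
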